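/- arXiv:1804.11169 — 6 statements merged into one kernel-verified Lean document; each statement's English description precedes it below -/
import Mathlib

section
/- Let d₁, d₂ ∈ ℝ² be linearly independent and let u, k, h : ℝ² → ℝ be smooth (C^∞) periodic functions. If Δ(e^{2u(ξ)}·Δh(ξ)) = div(k(ξ)²·∇h(ξ)) for all ξ ∈ ℝ², then h is constant. (This is the kernel computation for the elliptic operator P in the paper's Theorems 5.3(ii) and 5.6(ii): the kernel of P h = Δ(e^{2u}Δh) − div(k²∇h) on the torus consists exactly of the constants.) -/
open MeasureTheory Real

noncomputable section

/-- The Euclidean plane ℝ². -/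
abbrev E2 := EuclideanSpace ℝ (Fin 2)

/-- The flat Laplacian Δf = ∂²f/∂ξ₁² + ∂²f/∂ξ₂² on ℝ². -/
def lap (f : E2 → ℝ) (x : E2) : ℝ :=
  ∑ i : Fin 2,
    fderiv ℝ (fun y => fderiv ℝ f y (EuclideanSpace.single i 1)) x (EuclideanSpace.single i 1)

/-- The gradient of a function on ℝ², as a vector field. -/
def grad2 (f : E2 → ℝ) (x : E2) : E2 :=
  (WithLp.equiv 2 (Fin 2 → ℝ)).symm fun i => fderiv ℝ f x (EuclideanSpace.single i 1)

/-- The divergence div X = ∂X₁/∂ξ₁ + ∂X₂/∂ξ₂ of a vector field on ℝ². -/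
def div2 (X : E2 → E2) (x : E2) : ℝ :=
  ∑ i : Fin 2, fderiv ℝ (fun y => X y i) x (EuclideanSpace.single i 1)

/-!
Multiplying `P h = 0` by `h` and integrating by parts gives `∫ e^{2u} (Δh)² + k² |∇h|² = 0`.
Pointwise, with `w = e^{2u} Δh`, the integrand is the divergence of the periodic field
`w ∇h - h ∇w + h k² ∇h`, and a periodic field with nonnegative divergence has zero divergence:
after a linear change of variables sending `d₁, d₂` to the standard lattice, the divergence
theorem on a unit square shows that the divergence integrates to zero over every unit square.
Hence `Δh = 0`, and then the same argument applied to the field `h ∇h` gives `∇h = 0`.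
-/

open Function LinearMap Set
open scoped ContDiff InnerProductSpace

lemma Function.Periodic.fderiv {𝕜 E F : Type*} [NontriviallyNormedField 𝕜]
    [NormedAddCommGroup E] [NormedSpace 𝕜 E] [NormedAddCommGroup F] [NormedSpace 𝕜 F]
    {f : E → F} {d : E} (hf : Periodic f d) : Periodic (fderiv 𝕜 f) d := fun x => by
  rw [← fderiv_comp_add_right, funext hf]

lemma trace_fderiv_conj {𝕜 E F : Type*} [NontriviallyNormedField 𝕜]
    [NormedAddCommGroup E] [NormedSpace 𝕜 E] [NormedAddCommGroup F] [NormedSpace 𝕜 F]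
    (e : E ≃L[𝕜] F) {X : E → E} {y : F} (hX : DifferentiableAt 𝕜 X (e.symm y)) :
    trace 𝕜 F (fderiv 𝕜 (e ∘ X ∘ e.symm) y) = trace 𝕜 E (fderiv 𝕜 X (e.symm y)) := by
  rw [(e.hasFDerivAt.comp y (hX.hasFDerivAt.comp y e.symm.hasFDerivAt)).fderiv,
    ← trace_conj' _ e.toLinearEquiv]
  rfl

lemma ContDiff.continuous_trace_fderiv {E : Type*} [NormedAddCommGroup E] [NormedSpace ℝ E]
    [FiniteDimensional ℝ E] {X : E → E} (hX : ContDiff ℝ 1 X) :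
    Continuous fun x => trace ℝ E (fderiv ℝ X x) :=
  (LinearMap.continuous_of_finiteDimensional
    (trace ℝ E ∘ₗ ContinuousLinearMap.coeLM ℝ)).comp (hX.continuous_fderiv one_ne_zero)

lemma trace_eq_fst_apply_add_snd_apply (A : ℝ × ℝ →L[ℝ] ℝ × ℝ) :
    trace ℝ (ℝ × ℝ) A = (A (1, 0)).1 + (A (0, 1)).2 := by
  rw [trace_eq_matrix_trace ℝ (Module.Basis.finTwoProd ℝ), Matrix.trace_fin_two]
  simp [LinearMap.toMatrix_apply]

lemma integral_trace_fderiv_Icc_eq_zero_of_periodic {Y : ℝ × ℝ → ℝ × ℝ} (hY : ContDiff ℝ 1 Y)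
    (h₁ : Periodic Y (1, 0)) (h₂ : Periodic Y (0, 1)) (a : ℝ × ℝ) :
    ∫ p in Icc a (a + 1), trace ℝ (ℝ × ℝ) (fderiv ℝ Y p) = 0 := by
  have hY' : Differentiable ℝ Y := hY.differentiable one_ne_zero
  have hfst : ∀ p, HasFDerivAt (fun q => (Y q).1)
      ((ContinuousLinearMap.fst ℝ ℝ ℝ).comp (fderiv ℝ Y p)) p :=
    fun p => (ContinuousLinearMap.fst ℝ ℝ ℝ).hasFDerivAt.comp p (hY' p).hasFDerivAt
  have hsnd : ∀ p, HasFDerivAt (fun q => (Y q).2)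
      ((ContinuousLinearMap.snd ℝ ℝ ℝ).comp (fderiv ℝ Y p)) p :=
    fun p => (ContinuousLinearMap.snd ℝ ℝ ℝ).hasFDerivAt.comp p (hY' p).hasFDerivAt
  have hshift₁ : ∀ x y, Y (x + 1, y) = Y (x, y) := fun x y => by simpa using h₁ (x, y)
  have hshift₂ : ∀ x y, Y (x, y + 1) = Y (x, y) := fun x y => by simpa using h₂ (x, y)
  have hdiv := integral_divergence_prod_Icc_of_hasFDerivAt_of_le (fun q => (Y q).1)
    (fun q => (Y q).2) _ _ a (a + 1) (by simp) hY.continuous.fst.continuousOn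
    hY.continuous.snd.continuousOn (fun p _ => hfst p) (fun p _ => hsnd p)
    ((hY.continuous_trace_fderiv.continuousOn.integrableOn_compact isCompact_Icc).congr_fun
      (fun p _ => trace_eq_fst_apply_add_snd_apply _) measurableSet_Icc)
  simp only [trace_eq_fst_apply_add_snd_apply]
  refine hdiv.trans ?_
  simp [hshift₁, hshift₂]

lemma eq_zero_of_setIntegral_Icc_eq_zero {g : ℝ × ℝ → ℝ} (hg : Continuous g) (hg₀ : 0 ≤ g)
    (hI : ∀ a, ∫ p in Icc a (a + 1), g p = 0) (q : ℝ × ℝ) : g q = 0 := by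
  set a : ℝ × ℝ := (q.1 - 1 / 2, q.2 - 1 / 2)
  set U := Ioo a.1 (a.1 + 1) ×ˢ Ioo a.2 (a.2 + 1)
  have hUsub : U ⊆ Icc a (a + 1) := by
    rw [Icc_prod_eq]
    exact prod_mono Ioo_subset_Icc_self Ioo_subset_Icc_self
  have hq : q ∈ U := by
    simp only [U, a, mem_prod, mem_Ioo]
    constructor <;> constructor <;> linarith
  have hae : g =ᵐ[volume.restrict (Icc a (a + 1))] 0 :=
    (setIntegral_eq_zero_iff_of_nonneg_ae (ae_of_all _ hg₀)
      (hg.continuousOn.integrableOn_compact isCompact_Icc)).1 (hI a)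
  exact Measure.eqOn_open_of_ae_eq (ae_restrict_of_ae_restrict_of_subset hUsub hae)
    (isOpen_Ioo.prod isOpen_Ioo) hg.continuousOn continuousOn_const hq

lemma trace_fderiv_eq_zero_of_nonneg_of_periodic_prod {Y : ℝ × ℝ → ℝ × ℝ} (hY : ContDiff ℝ 1 Y)
    (h₁ : Periodic Y (1, 0)) (h₂ : Periodic Y (0, 1))
    (hY₀ : ∀ p, 0 ≤ trace ℝ (ℝ × ℝ) (fderiv ℝ Y p)) (p : ℝ × ℝ) :
    trace ℝ (ℝ × ℝ) (fderiv ℝ Y p) = 0 :=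
  eq_zero_of_setIntegral_Icc_eq_zero hY.continuous_trace_fderiv hY₀
    (integral_trace_fderiv_Icc_eq_zero_of_periodic hY h₁ h₂) p

theorem trace_fderiv_eq_zero_of_nonneg_of_periodic {E : Type*} [NormedAddCommGroup E]
    [NormedSpace ℝ E] (b : Module.Basis (Fin 2) ℝ E) {X : E → E} (hX : ContDiff ℝ 1 X)
    (h₀ : Periodic X (b 0)) (h₁ : Periodic X (b 1))
    (hX₀ : ∀ x, 0 ≤ trace ℝ E (fderiv ℝ X x)) (x : E) : trace ℝ E (fderiv ℝ X x) = 0 := by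
  have : FiniteDimensional ℝ E := b.finiteDimensional_of_finite
  let e : E ≃L[ℝ] ℝ × ℝ :=
    (b.equivFun.trans (LinearEquiv.finTwoArrow ℝ ℝ)).toContinuousLinearEquiv
  have he₀ : e.symm (1, 0) = b 0 := by simp [e]
  have he₁ : e.symm (0, 1) = b 1 := by simp [e]
  have hconj : ∀ p, trace ℝ (ℝ × ℝ) (fderiv ℝ (e ∘ X ∘ e.symm) p)
      = trace ℝ E (fderiv ℝ X (e.symm p)) :=
    fun p => trace_fderiv_conj e ((hX.differentiable one_ne_zero) _)
  have key := trace_fderiv_eq_zero_of_nonneg_of_periodic_prod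
    (e.contDiff.comp (hX.comp e.symm.contDiff))
    (fun p => by simp [he₀, h₀ _]) (fun p => by simp [he₁, h₁ _])
    (fun p => hconj p ▸ hX₀ _) (e x)
  simpa [hconj] using key

lemma grad2_apply (f : E2 → ℝ) (x : E2) (i : Fin 2) :
    grad2 f x i = fderiv ℝ f x (EuclideanSpace.single i 1) := rfl

lemma lap_eq_div2_grad2 (f : E2 → ℝ) : lap f = div2 (grad2 f) := rfl

lemma inner_grad2 (f : E2 → ℝ) (x v : E2) : ⟪grad2 f x, v⟫_ℝ = fderiv ℝ f x v := by
  conv_rhs => rw [← (EuclideanSpace.basisFun (Fin 2) ℝ).sum_repr v]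
  simp [PiLp.inner_apply, grad2_apply]

lemma div2_eq_trace {X : E2 → E2} {x : E2} (hX : DifferentiableAt ℝ X x) :
    div2 X x = trace ℝ E2 (fderiv ℝ X x) := by
  rw [trace_eq_matrix_trace ℝ (EuclideanSpace.basisFun (Fin 2) ℝ).toBasis, Matrix.trace]
  refine Finset.sum_congr rfl fun i _ => ?_
  have : (fun y => X y i) = EuclideanSpace.proj i ∘ X := rfl
  rw [this, ((EuclideanSpace.proj i).hasFDerivAt.comp x hX.hasFDerivAt).fderiv]
  simp [LinearMap.toMatrix_apply]

lemma ContDiff.grad2 {f : E2 → ℝ} {m n : WithTop ℕ∞} (hf : ContDiff ℝ n f) (hmn : m + 1 ≤ n) :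
    ContDiff ℝ m (grad2 f) :=
  (contDiff_piLp 2).2 fun _ => (hf.fderiv_right hmn).clm_apply contDiff_const

lemma ContDiff.div2 {X : E2 → E2} {m n : WithTop ℕ∞} (hX : ContDiff ℝ n X) (hmn : m + 1 ≤ n) :
    ContDiff ℝ m (div2 X) :=
  ContDiff.sum fun i _ => (((contDiff_piLp 2).1 hX i).fderiv_right hmn).clm_apply contDiff_const

lemma ContDiff.lap {f : E2 → ℝ} {m n : WithTop ℕ∞} (hf : ContDiff ℝ n f) (hmn : m + 2 ≤ n) :
    ContDiff ℝ m (lap f) :=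
  (hf.grad2 (m := m + 1) (by rwa [add_assoc, one_add_one_eq_two])).div2 le_rfl

lemma Function.Periodic.grad2 {f : E2 → ℝ} {d : E2} (hf : Periodic f d) :
    Periodic (grad2 f) d := fun x => by
  simp only [_root_.grad2, hf.fderiv x]

lemma Function.Periodic.div2 {X : E2 → E2} {d : E2} (hX : Periodic X d) :
    Periodic (div2 X) d := fun x => by
  refine Finset.sum_congr rfl fun i _ => ?_
  have hXi : Periodic (fun y => X y i) d := fun y => by simp only [hX y]
  rw [hXi.fderiv x]

lemma Function.Periodic.lap {f : E2 → ℝ} {d : E2} (hf : Periodic f d) : Periodic (lap f) d :=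
  hf.grad2.div2

lemma div2_add {X Y : E2 → E2} {x : E2} (hX : DifferentiableAt ℝ X x)
    (hY : DifferentiableAt ℝ Y x) : div2 (X + Y) x = div2 X x + div2 Y x := by
  rw [div2_eq_trace (hX.add hY), div2_eq_trace hX, div2_eq_trace hY, fderiv_add hX hY]
  simp

lemma div2_sub {X Y : E2 → E2} {x : E2} (hX : DifferentiableAt ℝ X x)
    (hY : DifferentiableAt ℝ Y x) : div2 (X - Y) x = div2 X x - div2 Y x := by
  rw [div2_eq_trace (hX.sub hY), div2_eq_trace hX, div2_eq_trace hY, fderiv_sub hX hY]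
  simp

lemma div2_smul {φ : E2 → ℝ} {X : E2 → E2} {x : E2} (hφ : DifferentiableAt ℝ φ x)
    (hX : DifferentiableAt ℝ X x) :
    div2 (φ • X) x = ⟪grad2 φ x, X x⟫_ℝ + φ x * div2 X x := by
  rw [div2_eq_trace (hφ.smul hX), div2_eq_trace hX, fderiv_smul hφ hX, inner_grad2]
  simp [add_comm]

theorem div2_eq_zero_of_nonneg_of_periodic {d₁ d₂ : E2} (hd : LinearIndependent ℝ ![d₁, d₂])
    {X : E2 → E2} (hX : ContDiff ℝ 1 X) (h₁ : Periodic X d₁) (h₂ : Periodic X d₂)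
    (hX₀ : ∀ x, 0 ≤ div2 X x) (x : E2) : div2 X x = 0 := by
  have htrace : ∀ x, div2 X x = trace ℝ E2 (fderiv ℝ X x) :=
    fun x => div2_eq_trace (hX.differentiable one_ne_zero x)
  let b := basisOfLinearIndependentOfCardEqFinrank hd (by simp)
  rw [htrace]
  exact trace_fderiv_eq_zero_of_nonneg_of_periodic b hX (by simpa [b] using h₁)
    (by simpa [b] using h₂) (fun x => htrace x ▸ hX₀ x) x

def greenField (w h c : E2 → ℝ) : E2 → E2 :=
  w • grad2 h - h • grad2 w + h • (c • grad2 h)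

lemma Function.Periodic.greenField {w h c : E2 → ℝ} {d : E2} (hw : Periodic w d)
    (hh : Periodic h d) (hc : Periodic c d) : Periodic (greenField w h c) d := fun y => by
  simp only [_root_.greenField, Pi.add_apply, Pi.sub_apply, Pi.smul_apply', hw y, hh y, hc y,
    hw.grad2 y, hh.grad2 y]

lemma ContDiff.greenField {w h c : E2 → ℝ} {n : WithTop ℕ∞} (hw : ContDiff ℝ (n + 1) w)
    (hh : ContDiff ℝ (n + 1) h) (hc : ContDiff ℝ n c) : ContDiff ℝ n (greenField w h c) := by
  have hle : n ≤ n + 1 := le_self_add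
  exact (((hw.of_le hle).smul (hh.grad2 le_rfl)).sub ((hh.of_le hle).smul (hw.grad2 le_rfl))).add
    ((hh.of_le hle).smul (hc.smul (hh.grad2 le_rfl)))

lemma div2_greenField {w h c : E2 → ℝ} (hw : ContDiff ℝ 2 w) (hh : ContDiff ℝ 2 h)
    (hc : ContDiff ℝ 1 c) {x : E2} (hx : lap w x = div2 (c • grad2 h) x) :
    div2 (greenField w h c) x = w x * lap h x + c x * ‖grad2 h x‖ ^ 2 := by
  have dw := hw.differentiable two_ne_zero x
  have dh := hh.differentiable two_ne_zero x
  have dgw := (hw.grad2 (m := 1) le_rfl).differentiable one_ne_zero x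
  have dgh := (hh.grad2 (m := 1) le_rfl).differentiable one_ne_zero x
  have dcgh := (hc.differentiable one_ne_zero x).smul dgh
  rw [greenField, div2_add ((dw.smul dgh).sub (dh.smul dgw)) (dh.smul dcgh),
    div2_sub (dw.smul dgh) (dh.smul dgw), div2_smul dw dgh, div2_smul dh dgw, div2_smul dh dcgh,
    ← hx, ← lap_eq_div2_grad2 h, ← lap_eq_div2_grad2 w, Pi.smul_apply', real_inner_smul_right,
    real_inner_self_eq_norm_sq, real_inner_comm (grad2 w x)]
  ring

theorem mul_lap_add_mul_norm_grad2_sq_eq_zero {d₁ d₂ : E2} (hd : LinearIndependent ℝ ![d₁, d₂])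
    {w h c : E2 → ℝ} (hw : ContDiff ℝ 2 w) (hh : ContDiff ℝ 2 h) (hc : ContDiff ℝ 1 c)
    (hw₁ : Periodic w d₁) (hw₂ : Periodic w d₂) (hh₁ : Periodic h d₁) (hh₂ : Periodic h d₂)
    (hc₁ : Periodic c d₁) (hc₂ : Periodic c d₂) (heq : ∀ x, lap w x = div2 (c • grad2 h) x)
    (hnonneg : ∀ x, 0 ≤ w x * lap h x + c x * ‖grad2 h x‖ ^ 2) (x : E2) :
    w x * lap h x + c x * ‖grad2 h x‖ ^ 2 = 0 := by
  have hdiv := fun x => div2_greenField hw hh hc (heq x)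
  rw [← hdiv]
  exact div2_eq_zero_of_nonneg_of_periodic hd (ContDiff.greenField (n := 1) hw hh hc)
    (hw₁.greenField hh₁ hc₁) (hw₂.greenField hh₂ hc₂) (fun x => hdiv x ▸ hnonneg x) x

theorem exists_eq_const_of_lap_eq_zero_of_periodic {d₁ d₂ : E2}
    (hd : LinearIndependent ℝ ![d₁, d₂]) {h : E2 → ℝ} (hh : ContDiff ℝ 2 h) (h₁ : Periodic h d₁)
    (h₂ : Periodic h d₂) (hlap : ∀ x, lap h x = 0) : ∃ C : ℝ, ∀ x, h x = C := by
  -- `Δh = 0` is the equation `Δw = div (c ∇h)` for `w = 0`, `c = 1`.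
  have hgrad : ∀ x, grad2 h x = 0 := fun x => by
    simpa using mul_lap_add_mul_norm_grad2_sq_eq_zero hd (w := 0) (c := 1) contDiff_const hh
      contDiff_const (fun _ => rfl) (fun _ => rfl) h₁ h₂ (fun _ => rfl) (fun _ => rfl)
      (fun x => by rw [one_smul, ← lap_eq_div2_grad2, hlap]; simp [lap]) (fun x => by simp) x
  refine ⟨h 0, fun x => is_const_of_fderiv_eq_zero (hh.differentiable two_ne_zero)
    (fun y => ContinuousLinearMap.ext fun v => ?_) x 0⟩
  rw [← inner_grad2, hgrad, inner_zero_left, _root_.zero_apply]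

/-- If u, k, h are smooth periodic and Δ(e^{2u}·Δh) = div(k²·∇h) everywhere, then h
is constant.  (Kernel of the operator P in Theorems 5.3(ii) and 5.6(ii).) -/
theorem kernel_of_P_is_constants
    (d₁ d₂ : E2) (hd : LinearIndependent ℝ ![d₁, d₂])
    (u k h : E2 → ℝ)
    (hu : ContDiff ℝ (⊤ : ℕ∞) u) (hk : ContDiff ℝ (⊤ : ℕ∞) k)
    (hh : ContDiff ℝ (⊤ : ℕ∞) h)
    (hu_per : ∀ ξ : E2, u (ξ + d₁) = u ξ ∧ u (ξ + d₂) = u ξ)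
    (hk_per : ∀ ξ : E2, k (ξ + d₁) = k ξ ∧ k (ξ + d₂) = k ξ)
    (hh_per : ∀ ξ : E2, h (ξ + d₁) = h ξ ∧ h (ξ + d₂) = h ξ)
    (heq : ∀ ξ : E2, lap (fun y => Real.exp (2 * u y) * lap h y) ξ
      = div2 (fun y => (k y) ^ 2 • grad2 h y) ξ) :
    ∃ C : ℝ, ∀ ξ : E2, h ξ = C := by
  have pu₁ : Periodic u d₁ := fun ξ => (hu_per ξ).1
  have pu₂ : Periodic u d₂ := fun ξ => (hu_per ξ).2
  have ph₁ : Periodic h d₁ := fun ξ => (hh_per ξ).1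
  have ph₂ : Periodic h d₂ := fun ξ => (hh_per ξ).2
  have hw : ContDiff ℝ 2 fun y => exp (2 * u y) * lap h y :=
    ((contDiff_const.mul (hu.of_le ENat.LEInfty.out)).exp).mul
      ((hh.of_le ENat.LEInfty.out : ContDiff ℝ 4 h).lap (by norm_num))
  have pw : ∀ {d}, Periodic u d → Periodic h d → Periodic (fun y => exp (2 * u y) * lap h y) d :=
    fun pu ph y => by simp only [pu y, ph.lap y]
  have hsq : ∀ x, 0 ≤ exp (2 * u x) * lap h x * lap h x := fun x => by
    rw [mul_assoc]; exact mul_nonneg (exp_pos _).le (mul_self_nonneg _)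
  have hlap : ∀ x, lap h x = 0 := fun x => by
    have key := mul_lap_add_mul_norm_grad2_sq_eq_zero hd hw (hh.of_le ENat.LEInfty.out)
      ((hk.pow 2).of_le ENat.LEInfty.out) (pw pu₁ ph₁) (pw pu₂ ph₂) ph₁ ph₂
      (fun y => by simp only [(hk_per y).1]) (fun y => by simp only [(hk_per y).2]) heq
      (fun x => add_nonneg (hsq x) (by positivity)) x
    simpa [exp_ne_zero] using ((add_eq_zero_iff_of_nonneg (hsq x) (by positivity)).1 key).1
  exact exists_eq_const_of_lap_eq_zero_of_periodic hd (hh.of_le ENat.LEInfty.out) ph₁ ph₂ hlap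
end
end

section
/- Let λ₁ = λ₂ > λ₃ > 0, set μᵢ = (λ₁+λ₂+λ₃)/2 − λᵢ, a = μ₂²+μ₃², b = μ₁²+μ₃², c = μ₁²+μ₂², and A = a x² + b y² + c z². Then for (x, y, z) ∈ ℝ³ with x² + y² + z² = 1, the following are equivalent: (i) there exists λ' ∈ ℝ with x·(a² − 2aA − λ') = 0, y·(b² − 2bA − λ') = 0, z·(c² − 2cA − λ') = 0, and there is NO ν ∈ ℝ with a x = ν x, b y = ν y, c z = ν z; (ii) z² = 1/2 and x² + y² = 1/2. (Paper's Theorem 3.1, case λ₁ = λ₂ > λ₃: the non-harmonic biharmonic unit sections among left-invariant unit vector fields on SU(2) are exactly the two circles z = ±1/√2, x² + y² = 1/2.) -/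
/-!
When λ₁ = λ₂ we have μ₁ = μ₂, hence a = b, while λ₂ > λ₃ > 0 gives a − c = λ₁(λ₂ − λ₃) ≠ 0.
With a = b ≠ c the field is harmonic exactly when it is horizontal (z = 0) or vertical
(x = y = 0). Otherwise the biharmonic equations force a² − 2aA = c² − 2cA, i.e.
(a − c)(a + c − 2A) = 0, so 2A = a + c; on the unit sphere 2A − (a + c) = (a − c)(1 − 2z²),
so this means z² = 1/2.
-/

/-- The paper's criterion for V = x e₁ + y e₂ + z e₃ to be a biharmonic unit section, where
`A` stands for a x² + b y² + c z². -/
def IsBiharmonicSection (a b c A x y z : ℝ) : Prop :=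
  ∃ l' : ℝ, x * (a ^ 2 - 2 * a * A - l') = 0 ∧ y * (b ^ 2 - 2 * b * A - l') = 0 ∧
    z * (c ^ 2 - 2 * c * A - l') = 0

def IsHarmonicSection (a b c x y z : ℝ) : Prop :=
  ∃ ν : ℝ, a * x = ν * x ∧ b * y = ν * y ∧ c * z = ν * z

section EqualFirstCoefficients

variable {a c A x y z : ℝ}

theorem isHarmonicSection_iff (hac : a ≠ c) :
    IsHarmonicSection a a c x y z ↔ z = 0 ∨ x = 0 ∧ y = 0 := by
  constructor
  · rintro ⟨ν, hx, hy, hz⟩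
    by_contra! h
    obtain ⟨hz0, hxy⟩ := h
    have hνc : c = ν := mul_right_cancel₀ hz0 hz
    have hνa : a = ν := by
      by_cases hx0 : x = 0
      · exact mul_right_cancel₀ (hxy hx0) hy
      · exact mul_right_cancel₀ hx0 hx
    exact hac (hνa.trans hνc.symm)
  · rintro (rfl | ⟨rfl, rfl⟩)
    · exact ⟨a, rfl, rfl, by ring⟩
    · exact ⟨c, by ring, by ring, rfl⟩

theorem isBiharmonicSection_iff (hac : a ≠ c) :
    IsBiharmonicSection a a c A x y z ↔ z = 0 ∨ x = 0 ∧ y = 0 ∨ 2 * A = a + c := by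
  have hsplit : a ^ 2 - 2 * a * A - (c ^ 2 - 2 * c * A) = (a - c) * (a + c - 2 * A) := by ring
  constructor
  · rintro ⟨l', hx, hy, hz⟩
    by_contra! h
    obtain ⟨hz0, hxy, hA⟩ := h
    have hl' : l' = c ^ 2 - 2 * c * A := by
      linarith [(mul_eq_zero.mp hz).resolve_left hz0]
    have ha : a ^ 2 - 2 * a * A - l' = 0 := by
      by_cases hx0 : x = 0
      · exact (mul_eq_zero.mp hy).resolve_left (hxy hx0)
      · exact (mul_eq_zero.mp hx).resolve_left hx0
    rw [hl', hsplit] at ha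
    exact hA (by linarith [(mul_eq_zero.mp ha).resolve_left (sub_ne_zero.mpr hac)])
  · rintro (rfl | ⟨rfl, rfl⟩ | hA)
    · exact ⟨a ^ 2 - 2 * a * A, by ring, by ring, by ring⟩
    · exact ⟨c ^ 2 - 2 * c * A, by ring, by ring, by ring⟩
    · have ha : a ^ 2 - 2 * a * A - (c ^ 2 - 2 * c * A) = 0 := by
        rw [hsplit, ← hA]; ring
      exact ⟨c ^ 2 - 2 * c * A, by rw [ha]; ring, by rw [ha]; ring, by ring⟩

theorem two_mul_eq_add_iff_sq_eq_half (hac : a ≠ c) (hxyz : x ^ 2 + y ^ 2 + z ^ 2 = 1)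
    (hA : A = a * (x ^ 2 + y ^ 2) + c * z ^ 2) : 2 * A = a + c ↔ z ^ 2 = 1 / 2 := by
  have hgap : 2 * A - (a + c) = (a - c) * (1 - 2 * z ^ 2) := by
    rw [hA, show x ^ 2 + y ^ 2 = 1 - z ^ 2 by linarith]; ring
  constructor
  · intro h
    have := (mul_eq_zero.mp (hgap.symm.trans (sub_eq_zero.mpr h))).resolve_left
      (sub_ne_zero.mpr hac)
    linarith
  · intro h
    rw [h] at hgap
    linarith

end EqualFirstCoefficients

/-- Theorem 3.1, case λ₁ = λ₂ > λ₃ > 0: the non-harmonic biharmonic unit sections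
among left-invariant unit vector fields on SU(2) are exactly the two circles
z = ±1/√2, x² + y² = 1/2 (algebraic form). -/
theorem su2_case12_nonharmonic_biharmonic_sections
    (l₁ l₂ l₃ : ℝ) (h12 : l₁ = l₂) (h23 : l₂ > l₃) (h3 : 0 < l₃)
    (μ₁ μ₂ μ₃ : ℝ)
    (hμ₁ : μ₁ = (l₁ + l₂ + l₃) / 2 - l₁)
    (hμ₂ : μ₂ = (l₁ + l₂ + l₃) / 2 - l₂)
    (hμ₃ : μ₃ = (l₁ + l₂ + l₃) / 2 - l₃)
    (a b c : ℝ)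
    (ha : a = μ₂ ^ 2 + μ₃ ^ 2) (hb : b = μ₁ ^ 2 + μ₃ ^ 2) (hc : c = μ₁ ^ 2 + μ₂ ^ 2)
    (x y z : ℝ) (hxyz : x ^ 2 + y ^ 2 + z ^ 2 = 1)
    (A : ℝ) (hA : A = a * x ^ 2 + b * y ^ 2 + c * z ^ 2) :
    ((∃ l' : ℝ,
        x * (a ^ 2 - 2 * a * A - l') = 0 ∧
        y * (b ^ 2 - 2 * b * A - l') = 0 ∧
        z * (c ^ 2 - 2 * c * A - l') = 0) ∧
      ¬ ∃ ν : ℝ, a * x = ν * x ∧ b * y = ν * y ∧ c * z = ν * z)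
    ↔ (z ^ 2 = 1 / 2 ∧ x ^ 2 + y ^ 2 = 1 / 2) := by
  have hab : a = b := by rw [ha, hb, hμ₁, hμ₂, h12]
  subst hab
  have hac : a ≠ c := by
    have hgap : a - c = l₁ * (l₂ - l₃) := by rw [ha, hc, hμ₁, hμ₂, hμ₃, h12]; ring
    exact sub_ne_zero.mp (hgap ▸ (mul_pos (by linarith) (by linarith)).ne')
  change IsBiharmonicSection a a c A x y z ∧ ¬ IsHarmonicSection a a c x y z ↔ _
  rw [isBiharmonicSection_iff hac, isHarmonicSection_iff hac,
    two_mul_eq_add_iff_sq_eq_half hac hxyz (by rw [hA]; ring)]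
  constructor
  · rintro ⟨hz | hxy | hz, hnot⟩
    · exact absurd (Or.inl hz) hnot
    · exact absurd (Or.inr hxy) hnot
    · exact ⟨hz, by linarith⟩
  · rintro ⟨hz, hxy⟩
    refine ⟨Or.inr (Or.inr hz), ?_⟩
    rintro (rfl | ⟨rfl, rfl⟩)
    · norm_num at hz
    · norm_num at hxy
end

section
/- Let λ₁ > λ₂ = λ₃ > 0, set μᵢ = (λ₁+λ₂+λ₃)/2 − λᵢ, a = μ₂²+μ₃², b = μ₁²+μ₃², c = μ₁²+μ₂², and A = a x² + b y² + c z². Then for (x, y, z) ∈ ℝ³ with x² + y² + z² = 1, the following are equivalent: (i) there exists λ' ∈ ℝ with x·(a² − 2aA − λ') = 0, y·(b² − 2bA − λ') = 0, z·(c² − 2cA − λ') = 0, and there is NO ν ∈ ℝ with a x = ν x, b y = ν y, c z = ν z; (ii) x² = 1/2 and y² + z² = 1/2. (Paper's Theorem 3.1, case λ₁ > λ₂ = λ₃: the non-harmonic biharmonic unit sections among left-invariant unit vector fields on SU(2) are exactly the two circles x = ±1/√2, y² + z² = 1/2.) -/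
/-! When `λ₂ = λ₃` we get `μ₂ = μ₃`, hence `b = c`, while `a - b = (λ₁ - λ₂) λ₃ > 0`. Both the
harmonic and the biharmonic systems then say that `(x, y, z)` is supported on the coordinates
where a vector of the shape `(α, β, β)` takes one common value. This happens iff `x = 0`, or
`y = z = 0`, or `α = β`. For the harmonic system `α = a ≠ b = β`. For the biharmonic system
`α - β = (a - b)(a + b - 2A)`, and on the unit sphere `A = b + (a - b) x²`, so `α = β` exactly
when `x² = 1/2`; this already rules out `x = 0` and `y = z = 0`. -/

section CommonMultiplier

variable {K : Type*} [Field K]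

theorem exists_common_multiplier_iff (α β x y z : K) :
    (∃ t : K, x * (α - t) = 0 ∧ y * (β - t) = 0 ∧ z * (β - t) = 0) ↔
      (x = 0 ∨ y = 0 ∧ z = 0) ∨ α = β := by
  constructor
  · rintro ⟨t, hx, hy, hz⟩
    by_cases hx0 : x = 0
    · exact Or.inl (Or.inl hx0)
    by_cases hyz : y = 0 ∧ z = 0
    · exact Or.inl (Or.inr hyz)
    have hα : α = t := sub_eq_zero.mp ((mul_eq_zero.mp hx).resolve_left hx0)
    have hβ : β = t := by
      rcases not_and_or.mp hyz with hy0 | hz0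
      · exact sub_eq_zero.mp ((mul_eq_zero.mp hy).resolve_left hy0)
      · exact sub_eq_zero.mp ((mul_eq_zero.mp hz).resolve_left hz0)
    exact Or.inr (hα.trans hβ.symm)
  · rintro ((rfl | ⟨rfl, rfl⟩) | rfl)
    · exact ⟨β, by simp⟩
    · exact ⟨α, by simp⟩
    · exact ⟨α, by simp⟩

theorem exists_common_eigenvalue_iff {a b : K} (hab : a ≠ b) (x y z : K) :
    (∃ ν : K, a * x = ν * x ∧ b * y = ν * y ∧ b * z = ν * z) ↔ x = 0 ∨ y = 0 ∧ z = 0 := by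
  have hmul (p q ν : K) : p * q = ν * q ↔ q * (p - ν) = 0 := by
    rw [mul_sub, sub_eq_zero, mul_comm q, mul_comm q]
  simp only [hmul, exists_common_multiplier_iff, hab, or_false]

end CommonMultiplier

theorem sq_sub_two_mul_eq_iff {a b x A : ℝ} (hab : a ≠ b) (hA : A = b + (a - b) * x ^ 2) :
    a ^ 2 - 2 * a * A = b ^ 2 - 2 * b * A ↔ x ^ 2 = 1 / 2 := by
  have hfactor : a ^ 2 - 2 * a * A - (b ^ 2 - 2 * b * A) = (a - b) ^ 2 * (1 - 2 * x ^ 2) := by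
    rw [hA]; ring
  rw [← sub_eq_zero, hfactor, mul_eq_zero, or_iff_right (pow_ne_zero 2 (sub_ne_zero.mpr hab))]
  constructor <;> intro h <;> linarith

/-- Theorem 3.1, case λ₁ > λ₂ = λ₃ > 0: the non-harmonic biharmonic unit sections
among left-invariant unit vector fields on SU(2) are exactly the two circles
x = ±1/√2, y² + z² = 1/2 (algebraic form). -/
theorem su2_case23_nonharmonic_biharmonic_sections
    (l₁ l₂ l₃ : ℝ) (h12 : l₁ > l₂) (h23 : l₂ = l₃) (h3 : 0 < l₃)
    (μ₁ μ₂ μ₃ : ℝ)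
    (hμ₁ : μ₁ = (l₁ + l₂ + l₃) / 2 - l₁)
    (hμ₂ : μ₂ = (l₁ + l₂ + l₃) / 2 - l₂)
    (hμ₃ : μ₃ = (l₁ + l₂ + l₃) / 2 - l₃)
    (a b c : ℝ)
    (ha : a = μ₂ ^ 2 + μ₃ ^ 2) (hb : b = μ₁ ^ 2 + μ₃ ^ 2) (hc : c = μ₁ ^ 2 + μ₂ ^ 2)
    (x y z : ℝ) (hxyz : x ^ 2 + y ^ 2 + z ^ 2 = 1)
    (A : ℝ) (hA : A = a * x ^ 2 + b * y ^ 2 + c * z ^ 2) :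
    ((∃ l' : ℝ,
        x * (a ^ 2 - 2 * a * A - l') = 0 ∧
        y * (b ^ 2 - 2 * b * A - l') = 0 ∧
        z * (c ^ 2 - 2 * c * A - l') = 0) ∧
      ¬ ∃ ν : ℝ, a * x = ν * x ∧ b * y = ν * y ∧ c * z = ν * z)
    ↔ (x ^ 2 = 1 / 2 ∧ y ^ 2 + z ^ 2 = 1 / 2) := by
  have hcb : c = b := by rw [hc, hb, hμ₂, hμ₃, h23]
  have hab : a ≠ b := by
    have hdiff : a - b = (l₁ - l₂) * l₃ := by rw [ha, hb, hμ₁, hμ₂, hμ₃]; ring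
    exact sub_ne_zero.mp (hdiff ▸ (mul_pos (sub_pos.mpr h12) h3).ne')
  have hAx : A = b + (a - b) * x ^ 2 := by
    rw [hA, hcb]; linear_combination b * hxyz
  have hnot_harmonic : x ^ 2 = 1 / 2 → ¬(x = 0 ∨ y = 0 ∧ z = 0) := by
    rintro hx2 (rfl | ⟨rfl, rfl⟩)
    · norm_num at hx2
    · linarith
  subst hcb
  rw [exists_common_multiplier_iff, exists_common_eigenvalue_iff hab,
    sq_sub_two_mul_eq_iff hab hAx]
  constructor
  · rintro ⟨hD | hx2, hnD⟩
    · exact absurd hD hnD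
    · exact ⟨hx2, by linarith⟩
  · rintro ⟨hx2, -⟩
    exact ⟨Or.inr hx2, hnot_harmonic hx2⟩
end

section
/- For (x, y, z) ∈ ℝ³ with x² + y² + z² = 1, the following are equivalent: (i) there exists λ ∈ ℝ with x·(1 + 2z² + λ) = 0, y·(1 + 2z² + λ) = 0 and z·(4z² + λ) = 0, and there is NO ν ∈ ℝ with x = ν x, y = ν y, 2z = ν z; (ii) z² = 1/2 and x² + y² = 1/2. (Paper's Theorem 3.2(2): the non-harmonic biharmonic unit sections among left-invariant unit vector fields on Sol₃ are exactly the two circles z = ±1/√2, x² + y² = 1/2.) -/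
/-!
The harmonic condition `Δ̄V = νV` forces `ν = 2` as soon as `z ≠ 0`, hence `x = y = 0`; so `V` is
non-harmonic exactly when `z ≠ 0` and `(x, y) ≠ 0`. For such `V` the biharmonic equations pin the
multiplier twice, `λ = -(1 + 2z²)` and `λ = -4z²`, which is solvable iff `2z² = 1`; the unit
constraint then gives `x² + y² = 1/2`.
-/

section Field

variable {K : Type*} [Field K]

theorem exists_harmonic_multiplier_iff (x y z : K) :
    (∃ ν : K, x = ν * x ∧ y = ν * y ∧ 2 * z = ν * z) ↔ z = 0 ∨ (x = 0 ∧ y = 0) := by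
  constructor
  · rintro ⟨ν, hx, hy, hz⟩
    by_cases hz0 : z = 0
    · exact Or.inl hz0
    · have hν : ν = 2 := (mul_right_cancel₀ hz0 hz).symm
      subst hν
      exact Or.inr ⟨by linear_combination -hx, by linear_combination -hy⟩
  · rintro (hz0 | ⟨hx0, hy0⟩)
    · exact ⟨1, by ring, by ring, by rw [hz0]; ring⟩
    · exact ⟨2, by rw [hx0]; ring, by rw [hy0]; ring, rfl⟩

theorem exists_biharmonic_multiplier_iff {x y z : K} (hz : z ≠ 0) (hxy : x ≠ 0 ∨ y ≠ 0) :
    (∃ l : K, x * (1 + 2 * z ^ 2 + l) = 0 ∧ y * (1 + 2 * z ^ 2 + l) = 0 ∧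
        z * (4 * z ^ 2 + l) = 0) ↔ 2 * z ^ 2 = 1 := by
  constructor
  · rintro ⟨l, hx, hy, hz'⟩
    have h₁ : 1 + 2 * z ^ 2 + l = 0 := by
      rcases hxy with hx0 | hy0
      · exact (mul_eq_zero.mp hx).resolve_left hx0
      · exact (mul_eq_zero.mp hy).resolve_left hy0
    have h₂ : 4 * z ^ 2 + l = 0 := (mul_eq_zero.mp hz').resolve_left hz
    linear_combination h₂ - h₁
  · intro h
    exact ⟨-4 * z ^ 2, by linear_combination -x * h, by linear_combination -y * h, by ring⟩

end Field

/-- Theorem 3.2(2): the non-harmonic biharmonic unit sections among left-invariant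
unit vector fields on Sol₃ are exactly the two circles z = ±1/√2, x² + y² = 1/2
(algebraic form). -/
theorem sol3_nonharmonic_biharmonic_unit_sections
    (x y z : ℝ) (hxyz : x ^ 2 + y ^ 2 + z ^ 2 = 1) :
    ((∃ l : ℝ,
        x * (1 + 2 * z ^ 2 + l) = 0 ∧
        y * (1 + 2 * z ^ 2 + l) = 0 ∧
        z * (4 * z ^ 2 + l) = 0) ∧
      ¬ ∃ ν : ℝ, x = ν * x ∧ y = ν * y ∧ 2 * z = ν * z)
    ↔ (z ^ 2 = 1 / 2 ∧ x ^ 2 + y ^ 2 = 1 / 2) := by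
  rw [exists_harmonic_multiplier_iff, not_or, not_and_or]
  constructor
  · rintro ⟨hbi, hz, hxy⟩
    have hz2 := (exists_biharmonic_multiplier_iff hz hxy).mp hbi
    exact ⟨by linear_combination hz2 / 2, by linear_combination hxyz - hz2 / 2⟩
  · rintro ⟨hz2, hxy2⟩
    have hz : z ≠ 0 := by
      rintro rfl
      norm_num at hz2
    have hxy : x ≠ 0 ∨ y ≠ 0 := by
      by_contra! h
      rw [h.1, h.2] at hxy2
      norm_num at hxy2
    exact ⟨(exists_biharmonic_multiplier_iff hz hxy).mpr (by linear_combination 2 * hz2), hz, hxy⟩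
end

section
/- Let n ≥ 3 be an integer, c > 0 a real number, and V₁, V₂, …, Vₙ real numbers with V₁² + Σ_{i=2}^{n} Vᵢ² = 1. Then the following are equivalent: (i) there exists λ ∈ ℝ such that (c⁴·[(n−1)(n−3) − 2(n−1)(n−2)V₁²] − λ)·V₁ = 0 and (−c⁴·[1 + 2(n−2)V₁²] − λ)·Vᵢ = 0 for all 2 ≤ i ≤ n, and moreover NOT (V₁² = 1 or V₁ = 0); (ii) V₁² = 1/2 (so that Σ_{i=2}^{n} Vᵢ² = 1/2). (Paper's Theorem 3.3(1): on the n-dimensional Poincaré half-space of curvature −c², n > 2, the non-harmonic biharmonic unit sections among left-invariant unit vector fields are exactly the two (n−2)-spheres V₁ = ±1/√2, Σ_{i≥2} Vᵢ² = 1/2.) -/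
/-- Theorem 3.3(1): on the n-dimensional Poincaré half-space of curvature −c²
(n ≥ 3), the non-harmonic biharmonic unit sections among left-invariant unit
vector fields are exactly the two (n−2)-spheres V₁ = ±1/√2, Σ_{i≥2} Vᵢ² = 1/2. -/
theorem poincare_halfspace_nonharmonic_biharmonic_sections
    (n : ℕ) (hn : 3 ≤ n) (c : ℝ) (hc : 0 < c)
    (V : ℕ → ℝ)
    (hunit : V 1 ^ 2 + ∑ i ∈ Finset.Icc 2 n, V i ^ 2 = 1) :
    ((∃ l : ℝ,
        (c ^ 4 * (((n : ℝ) - 1) * ((n : ℝ) - 3)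
            - 2 * ((n : ℝ) - 1) * ((n : ℝ) - 2) * V 1 ^ 2) - l) * V 1 = 0 ∧
        ∀ i ∈ Finset.Icc 2 n,
          (-(c ^ 4) * (1 + 2 * ((n : ℝ) - 2) * V 1 ^ 2) - l) * V i = 0) ∧
      ¬ (V 1 ^ 2 = 1 ∨ V 1 = 0))
    ↔ V 1 ^ 2 = 1 / 2 := by
  have hn' : (3:ℝ) ≤ (n:ℝ) := by exact_mod_cast hn
  constructor
  · rintro ⟨⟨l, h1, h2⟩, hne⟩
    push_neg at hne
    obtain ⟨h1', h0⟩ := hne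
    obtain ⟨i, hi, hVi⟩ : ∃ i ∈ Finset.Icc 2 n, V i ≠ 0 := by
      by_contra h
      push_neg at h
      apply h1'
      have : ∑ i ∈ Finset.Icc 2 n, V i ^ 2 = 0 :=
        Finset.sum_eq_zero fun i hi => by rw [h i hi]; ring
      linarith
    have e1 : c ^ 4 * (((n : ℝ) - 1) * ((n : ℝ) - 3)
        - 2 * ((n : ℝ) - 1) * ((n : ℝ) - 2) * V 1 ^ 2) = l := by
      rcases mul_eq_zero.mp h1 with h | h
      · linarith
      · exact absurd h h0
    have e2 : -(c ^ 4) * (1 + 2 * ((n : ℝ) - 2) * V 1 ^ 2) = l := by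
      rcases mul_eq_zero.mp (h2 i hi) with h | h
      · linarith
      · exact absurd h hVi
    have key : c ^ 4 * (((n:ℝ) - 2) ^ 2 * (1 - 2 * V 1 ^ 2)) = 0 := by
      linear_combination e1 - e2
    have hc4 : c ^ 4 ≠ 0 := by positivity
    have h2' : ((n:ℝ) - 2) ^ 2 ≠ 0 := by nlinarith
    have := (mul_eq_zero.mp key).resolve_left hc4
    have := (mul_eq_zero.mp this).resolve_left h2'
    linarith
  · intro hV
    refine ⟨⟨-(c ^ 4) * ((n:ℝ) - 1), ?_, fun i _ => ?_⟩, ?_⟩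
    · rw [hV]; ring
    · rw [hV]; ring
    · rintro (h | h)
      · rw [hV] at h; norm_num at h
      · rw [h] at hV; norm_num at hV
end

section
/- Let n ≥ 3 be an integer, c > 0 a real number, and V₁, V₂, …, Vₙ real numbers with V₁² + Σ_{i=2}^{n} Vᵢ² = 1. Then the following are equivalent: (i) there exists μ ∈ ℝ such that (c⁴·[(n−1)(n−3) − 2(n−1)(n−2)V₁²] + c⁶·[n + (n−2)(2n−1)V₁²] − μ)·V₁ = 0 and (−c⁴·[1 + 2(n−2)V₁²] + c⁶·[2 + (n−2)(2n−1)V₁²] − μ)·Vᵢ = 0 for all 2 ≤ i ≤ n; (ii) V₁² = 1, or V₁ = 0, or (c² < n − 2 and V₁² = (c² + n − 2)/(2(n − 2))). (Paper's Theorem 3.3(2): the left-invariant biharmonic unit vector fields on the n-dimensional Poincaré half-space of curvature −c², n > 2, are V = ±X₁, the fields orthogonal to X₁, and—when c² < n−2—the two (n−2)-spheres V₁ = ±√((c²+n−2)/(2(n−2))), Σ_{i≥2} Vᵢ² = (n−2−c²)/(2(n−2)).) -/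
/-- Theorem 3.3(2): the left-invariant biharmonic unit vector fields on the
n-dimensional Poincaré half-space of curvature −c² (n ≥ 3) are V = ±X₁, the
fields orthogonal to X₁, and — when c² < n−2 — the two (n−2)-spheres
V₁ = ±√((c²+n−2)/(2(n−2))) (algebraic form). -/
theorem poincare_halfspace_biharmonic_unit_vector_fields
    (n : ℕ) (hn : 3 ≤ n) (c : ℝ) (hc : 0 < c)
    (V : ℕ → ℝ)
    (hunit : V 1 ^ 2 + ∑ i ∈ Finset.Icc 2 n, V i ^ 2 = 1) :
    ((∃ μ : ℝ,
        (c ^ 4 * (((n : ℝ) - 1) * ((n : ℝ) - 3)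
              - 2 * ((n : ℝ) - 1) * ((n : ℝ) - 2) * V 1 ^ 2)
          + c ^ 6 * ((n : ℝ) + ((n : ℝ) - 2) * (2 * (n : ℝ) - 1) * V 1 ^ 2) - μ) * V 1 = 0 ∧
        ∀ i ∈ Finset.Icc 2 n,
          (-(c ^ 4) * (1 + 2 * ((n : ℝ) - 2) * V 1 ^ 2)
            + c ^ 6 * (2 + ((n : ℝ) - 2) * (2 * (n : ℝ) - 1) * V 1 ^ 2) - μ) * V i = 0))
    ↔ (V 1 ^ 2 = 1 ∨ V 1 = 0 ∨
        (c ^ 2 < (n : ℝ) - 2 ∧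
          V 1 ^ 2 = (c ^ 2 + (n : ℝ) - 2) / (2 * ((n : ℝ) - 2)))) := by
  have hn3 : (3:ℝ) ≤ (n:ℝ) := by exact_mod_cast hn
  have hnn : (0:ℝ) < (n:ℝ) - 2 := by linarith
  have hc4 : (0:ℝ) < c ^ 4 := by positivity
  set A : ℝ := c ^ 4 * (((n : ℝ) - 1) * ((n : ℝ) - 3)
      - 2 * ((n : ℝ) - 1) * ((n : ℝ) - 2) * V 1 ^ 2)
      + c ^ 6 * ((n : ℝ) + ((n : ℝ) - 2) * (2 * (n : ℝ) - 1) * V 1 ^ 2) with hA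
  set B : ℝ := -(c ^ 4) * (1 + 2 * ((n : ℝ) - 2) * V 1 ^ 2)
      + c ^ 6 * (2 + ((n : ℝ) - 2) * (2 * (n : ℝ) - 1) * V 1 ^ 2) with hB
  have hsumnn : ∀ i ∈ Finset.Icc 2 n, (0:ℝ) ≤ V i ^ 2 := fun i _ => sq_nonneg _
  constructor
  · rintro ⟨μ, h1, h2⟩
    by_cases hV1 : V 1 = 0
    · exact Or.inr (Or.inl hV1)
    · have hμA : μ = A := by
        rcases mul_eq_zero.mp h1 with h | h
        · linarith
        · exact absurd h hV1
      by_cases hall : ∀ i ∈ Finset.Icc 2 n, V i = 0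
      · left
        have hsum : ∑ i ∈ Finset.Icc 2 n, V i ^ 2 = 0 :=
          Finset.sum_eq_zero fun i hi => by rw [hall i hi]; ring
        linarith
      · push_neg at hall
        obtain ⟨j, hj, hVj⟩ := hall
        have hμB : μ = B := by
          rcases mul_eq_zero.mp (h2 j hj) with h | h
          · linarith
          · exact absurd h hVj
        have hAB : A = B := by rw [← hμA, hμB]
        have key : c ^ 4 * ((n:ℝ) - 2) * (((n:ℝ) - 2) * (1 - 2 * V 1 ^ 2) + c ^ 2) = 0 := by
          rw [hA, hB] at hAB
          linear_combination hAB
        have hbr : ((n:ℝ) - 2) * (1 - 2 * V 1 ^ 2) + c ^ 2 = 0 := by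
          rcases mul_eq_zero.mp key with h | h
          · exact absurd h (by positivity)
          · exact h
        have hVlt : V 1 ^ 2 < 1 := by
          have hjle : V j ^ 2 ≤ ∑ i ∈ Finset.Icc 2 n, V i ^ 2 :=
            Finset.single_le_sum hsumnn hj
          have : (0:ℝ) < V j ^ 2 := by positivity
          linarith
        refine Or.inr (Or.inr ⟨?_, ?_⟩)
        · nlinarith
        · field_simp
          linarith [hbr]
  · rintro (h | h | ⟨hlt, hsq⟩)
    · -- V 1 ^ 2 = 1, all other V i = 0
      have hsum : ∑ i ∈ Finset.Icc 2 n, V i ^ 2 = 0 := by linarith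
      have hzero : ∀ i ∈ Finset.Icc 2 n, V i = 0 := by
        intro i hi
        have := (Finset.sum_eq_zero_iff_of_nonneg hsumnn).mp hsum i hi
        exact pow_eq_zero_iff (by norm_num) |>.mp this
      exact ⟨A, by ring, fun i hi => by rw [hzero i hi]; ring⟩
    · exact ⟨B, by rw [h]; ring, fun i hi => by ring⟩
    · have h2 : 2 * ((n:ℝ) - 2) * V 1 ^ 2 = c ^ 2 + (n:ℝ) - 2 := by
        rw [hsq]; field_simp
      have hAB : A = B := by
        rw [hA, hB]
        linear_combination (-(c ^ 4) * ((n:ℝ) - 2)) * h2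
      exact ⟨A, by ring, fun i hi => by rw [← hAB]; ring⟩
end
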